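/- arXiv:2401.14653 — 2 statements merged into one kernel-verified Lean document; each statement's English description precedes it below -/
import Mathlib

section
/- For integers n and k with 2n ≥ k + 3 ≥ 4 and 2n(2n+1) − 2n(k+2)(4k+5) + (k+2)(k−1) > 0, the graph f_n(k) satisfies χ_lt(f_n(k)) ≥ 2nk + 2. -/
open scoped Classical

namespace LTA

variable {V : Type*} {W : Type*}

/-- The induced weight of an edge: the sum of the labels of its two endpoints. -/
noncomputable def eWeight (fV : V → ℕ) : Sym2 V → ℕ :=
  Sym2.lift ⟨fun a b => fV a + fV b, fun a b => Nat.add_comm _ _⟩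

/-- The induced weight of a vertex: the sum of the labels of its incident edges. -/
noncomputable def vWeight [Fintype V] (G : SimpleGraph V) (fE : Sym2 V → ℕ) (v : V) : ℕ :=
  ∑ e ∈ G.edgeFinset, if v ∈ e then fE e else 0

/-- A total labeling: the labels form a bijection from `V ∪ E` onto `{1, …, p + q}`. -/
def IsTotalLabeling [Fintype V] (G : SimpleGraph V) (fV : V → ℕ) (fE : Sym2 V → ℕ) : Prop :=
  Function.Injective (Sum.elim fV (fun e : G.edgeSet => fE e.1)) ∧
    Set.range (Sum.elim fV (fun e : G.edgeSet => fE e.1)) =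
      Set.Icc 1 (Fintype.card V + G.edgeFinset.card)

/-- A local total antimagic labeling. -/
def IsLocalTotalAntimagic [Fintype V] (G : SimpleGraph V) (fV : V → ℕ) (fE : Sym2 V → ℕ) :
    Prop :=
  IsTotalLabeling G fV fE ∧
    (∀ u v, G.Adj u v → vWeight G fE u ≠ vWeight G fE v) ∧
    (∀ e₁ ∈ G.edgeSet, ∀ e₂ ∈ G.edgeSet, e₁ ≠ e₂ → (∃ v, v ∈ e₁ ∧ v ∈ e₂) →
      eWeight fV e₁ ≠ eWeight fV e₂) ∧
    (∀ v : V, ∀ e ∈ G.edgeSet, v ∈ e → vWeight G fE v ≠ eWeight fV e)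

/-- The number of distinct induced weights of a total labeling. -/
noncomputable def weightCount [Fintype V] (G : SimpleGraph V) (fV : V → ℕ)
    (fE : Sym2 V → ℕ) : ℕ :=
  (Finset.image (vWeight G fE) Finset.univ ∪ Finset.image (eWeight fV) G.edgeFinset).card

/-- The local total antimagic chromatic number `χ_lt`. -/
noncomputable def chiLT [Fintype V] (G : SimpleGraph V) : ℕ :=
  sInf {n | ∃ fV fE, IsLocalTotalAntimagic G fV fE ∧ weightCount G fV fE = n}

/-- A pendant edge: an edge incident to a vertex of degree 1. -/
def IsPendantEdge [Fintype V] (G : SimpleGraph V) (e : Sym2 V) : Prop :=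
  e ∈ G.edgeSet ∧ ∃ v ∈ e, G.degree v = 1

/-- The number of pendant edges of `G`. -/
noncomputable def pendantEdgeCount [Fintype V] (G : SimpleGraph V) : ℕ :=
  (G.edgeFinset.filter fun e => ∃ v ∈ e, G.degree v = 1).card

/-- A local antimagic (edge) labeling: a bijection from the edges onto `{1, …, q}` such that
adjacent vertices get distinct induced vertex weights. -/
def IsLocalAntimagic [Fintype V] (G : SimpleGraph V) (fE : Sym2 V → ℕ) : Prop :=
  Set.InjOn fE G.edgeSet ∧ fE '' G.edgeSet = Set.Icc 1 G.edgeFinset.card ∧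
    ∀ u v, G.Adj u v → vWeight G fE u ≠ vWeight G fE v

/-- The local antimagic chromatic number `χ_la`. -/
noncomputable def chiLA [Fintype V] (G : SimpleGraph V) : ℕ :=
  sInf {n | ∃ fE, IsLocalAntimagic G fE ∧ (Finset.image (vWeight G fE) Finset.univ).card = n}

/-- A local edge antimagic (vertex) labeling: a bijection from the vertices onto `{1, …, p}`
such that edges sharing an endpoint get distinct induced edge weights. -/
def IsLocalEdgeAntimagic [Fintype V] (G : SimpleGraph V) (fV : V → ℕ) : Prop :=
  Function.Injective fV ∧ Set.range fV = Set.Icc 1 (Fintype.card V) ∧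
    ∀ e₁ ∈ G.edgeSet, ∀ e₂ ∈ G.edgeSet, e₁ ≠ e₂ → (∃ v, v ∈ e₁ ∧ v ∈ e₂) →
      eWeight fV e₁ ≠ eWeight fV e₂

/-- The local edge antimagic chromatic number `χ_lea`. -/
noncomputable def chiLEA [Fintype V] (G : SimpleGraph V) : ℕ :=
  sInf {n | ∃ fV, IsLocalEdgeAntimagic G fV ∧ (Finset.image (eWeight fV) G.edgeFinset).card = n}

/-- The disjoint union of `m` copies of `G`. -/
def copies (m : ℕ) (G : SimpleGraph V) : SimpleGraph (Fin m × V) where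
  Adj x y := x.1 = y.1 ∧ G.Adj x.2 y.2
  symm := ⟨fun x y h => ⟨h.1.symm, h.2.symm⟩⟩
  loopless := ⟨fun x h => G.loopless.irrefl x.2 h.2⟩

/-- The graph obtained from `G` by attaching `s` pendant edges to the vertex `v`. -/
def attachPendants (G : SimpleGraph V) (v : V) (s : ℕ) : SimpleGraph (V ⊕ Fin s) :=
  SimpleGraph.fromRel (fun x y =>
    (∃ a b, G.Adj a b ∧ x = Sum.inl a ∧ y = Sum.inl b) ∨
    (∃ i : Fin s, x = Sum.inl v ∧ y = Sum.inr i))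

/-- The fan graph `f_n` (n triangles sharing a common vertex) with `k` pendant edges attached
to every degree-2 vertex: `f_n(k)`.  The common vertex is `Sum.inl none`, the outer vertices
are `Sum.inl (some w)`, and the pendant vertices are `Sum.inr (w, t)`. -/
def fanGraph (n k : ℕ) :
    SimpleGraph (Option (Fin n × Fin 2) ⊕ (Fin n × Fin 2) × Fin k) :=
  SimpleGraph.fromRel (fun x y =>
    (∃ w, x = Sum.inl none ∧ y = Sum.inl (some w)) ∨
    (∃ i : Fin n, x = Sum.inl (some (i, 0)) ∧ y = Sum.inl (some (i, 1))) ∨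
    (∃ w t, x = Sum.inl (some w) ∧ y = Sum.inr (w, t)))

/-!
A pendant vertex has the label of its pendant edge as weight, so the `2nk` pendant vertices carry
`2nk` distinct weights, and the outer endpoint of the pendant edge with the largest label
outweighs all of them. The weight of the center is at least `1 + ⋯ + 2n`, that of an outer vertex
at most the sum of the `k + 2` largest labels; the hypothesis on `n` and `k` says exactly that the
former exceeds the latter, so the center adds one more weight. This holds for every total
labeling. Since `sInf ∅ = 0` in `ℕ`, one local total antimagic labeling must also be exhibited:
the vertices take the smallest labels and the pendant edges the largest ones.
-/

section Labeling

open Finset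

theorem eWeight_ne_eWeight_of_injective {fV : V → ℕ} (hf : Function.Injective fV)
    {e₁ e₂ : Sym2 V} (hne : e₁ ≠ e₂) {v : V} (h₁ : v ∈ e₁) (h₂ : v ∈ e₂) :
    eWeight fV e₁ ≠ eWeight fV e₂ := by
  obtain ⟨a, rfl⟩ := Sym2.mem_iff_exists.mp h₁
  obtain ⟨b, rfl⟩ := Sym2.mem_iff_exists.mp h₂
  intro h
  obtain rfl : a = b := hf (Nat.add_left_cancel h)
  exact hne rfl

variable [Fintype V] {G : SimpleGraph V} {fV : V → ℕ} {fE : Sym2 V → ℕ}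

theorem vWeight_eq_sum_incidenceFinset (G : SimpleGraph V) (fE : Sym2 V → ℕ) (v : V) :
    vWeight G fE v = ∑ e ∈ G.incidenceFinset v, fE e := by
  rw [vWeight, ← sum_filter, SimpleGraph.incidenceFinset_eq_filter]

theorem degree_eq_vWeight_one (G : SimpleGraph V) (v : V) :
    G.degree v = vWeight G (fun _ => 1) v := by
  rw [vWeight_eq_sum_incidenceFinset, ← card_eq_sum_ones,
    SimpleGraph.card_incidenceFinset_eq_degree]

theorem edgeFinset_eq_map {ι : Type*} [Fintype ι] {f : ι → Sym2 V} (hf : Function.Injective f)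
    (hrange : Set.range f = G.edgeSet) : G.edgeFinset = univ.map ⟨f, hf⟩ := by
  ext e
  simp [← hrange]

theorem vWeight_eq_sum_of_range_eq {ι : Type*} [Fintype ι] {f : ι → Sym2 V}
    (hf : Function.Injective f) (hrange : Set.range f = G.edgeSet) (fE : Sym2 V → ℕ) (v : V) :
    vWeight G fE v = ∑ i, if v ∈ f i then fE (f i) else 0 := by
  rw [vWeight, edgeFinset_eq_map hf hrange, sum_map]
  rfl

theorem lt_vWeight (hpos : ∀ e ∈ G.edgeSet, 0 < fE e) {v : V} {e : Sym2 V}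
    (he : e ∈ G.incidenceSet v) (hv : 2 ≤ G.degree v) : fE e < vWeight G fE v := by
  rw [vWeight_eq_sum_incidenceFinset]
  obtain ⟨e', he', hne⟩ : ∃ e' ∈ G.incidenceFinset v, e' ≠ e := by
    apply exists_mem_ne
    rwa [SimpleGraph.card_incidenceFinset_eq_degree]
  rw [SimpleGraph.mem_incidenceFinset] at he'
  exact single_lt_sum hne (by simpa using he) (by simpa using he') (hpos e' he'.1)
    fun _ _ _ => Nat.zero_le _

theorem eWeight_lt_vWeight {m : ℕ} (hV : ∀ u, fV u ≤ m) (hE : ∀ e ∈ G.edgeSet, m < fE e)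
    {v : V} (hv : 2 ≤ G.degree v) (e : Sym2 V) : eWeight fV e < vWeight G fE v := by
  have hsum : G.degree v • (m + 1) ≤ vWeight G fE v := by
    rw [vWeight_eq_sum_incidenceFinset, ← SimpleGraph.card_incidenceFinset_eq_degree]
    exact card_nsmul_le_sum _ _ _ fun e he =>
      hE e (G.mem_edgeFinset.1 (G.incidenceFinset_subset v he))
  induction e with
  | _ a b =>
    have := hV a
    have := hV b
    simp only [smul_eq_mul] at hsum
    change fV a + fV b < _
    nlinarith

theorem two_mul_sum_range_add_mul (a b : ℤ) (d : ℕ) :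
    2 * ∑ i ∈ range d, (a + b * i) = d * (2 * a + b * (d - 1)) := by
  induction d with
  | zero => simp
  | succ d ih => rw [sum_range_succ, mul_add, ih]; push_cast; ring

theorem isTotalLabeling_of_injective (hV : Function.Injective fV)
    (hVr : ∀ v, fV v ∈ Set.Icc 1 (Fintype.card V)) (hE : Set.InjOn fE G.edgeSet)
    (hEr : ∀ e ∈ G.edgeSet,
      fE e ∈ Set.Icc (Fintype.card V + 1) (Fintype.card V + #G.edgeFinset)) :
    IsTotalLabeling G fV fE := by
  set f := Sum.elim fV fun e : G.edgeSet => fE e.1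
  have hf : Function.Injective f := by
    rintro (a | ⟨a, ha⟩) (b | ⟨b, hb⟩) h
    · exact congrArg Sum.inl (hV h)
    · exact absurd h ((hVr a).2.trans_lt (hEr b hb).1).ne
    · exact absurd h ((hVr b).2.trans_lt (hEr a ha).1).ne'
    · exact congrArg Sum.inr (Subtype.ext (hE ha hb h))
  refine ⟨hf, ?_⟩
  have hsub : univ.image f ⊆ Icc 1 (Fintype.card V + #G.edgeFinset) := by
    intro x hx
    obtain ⟨a | ⟨a, ha⟩, -, rfl⟩ := mem_image.1 hx <;> rw [mem_Icc]
    · exact ⟨(hVr a).1, (hVr a).2.trans (Nat.le_add_right _ _)⟩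
    · exact ⟨(Nat.le_add_left _ _).trans (hEr a ha).1, (hEr a ha).2⟩
  have hcard : #(Icc 1 (Fintype.card V + #G.edgeFinset)) ≤ #(univ.image f) := by
    rw [card_image_of_injective _ hf, card_univ, Fintype.card_sum, Nat.card_Icc,
      SimpleGraph.edgeFinset_card]
    omega
  rw [← Set.image_univ, ← coe_univ, ← coe_image, eq_of_subset_of_card_le hsub hcard, coe_Icc]

namespace IsTotalLabeling

variable (hT : IsTotalLabeling G fV fE)
include hT

theorem injOn_edge : Set.InjOn fE G.edgeSet := fun e₁ h₁ e₂ h₂ h => by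
  simpa using hT.1 (a₁ := Sum.inr ⟨e₁, h₁⟩) (a₂ := Sum.inr ⟨e₂, h₂⟩) h

theorem edge_mem_Icc {e : Sym2 V} (he : e ∈ G.edgeSet) :
    fE e ∈ Set.Icc 1 (Fintype.card V + #G.edgeFinset) := by
  rw [← hT.2]
  exact ⟨Sum.inr ⟨e, he⟩, rfl⟩

/-- The labels at `v` are `deg v` distinct integers in `[1, p + q]`. -/
theorem vWeight_bounds (v : V) :
    (G.degree v : ℤ) * (G.degree v + 1) ≤ 2 * vWeight G fE v ∧
      2 * (vWeight G fE v : ℤ) ≤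
        G.degree v * (2 * (Fintype.card V + #G.edgeFinset) - (G.degree v - 1)) := by
  set s := (G.incidenceFinset v).image fun e => (fE e : ℤ)
  have hinj : Set.InjOn (fun e => (fE e : ℤ)) (G.incidenceFinset v) :=
    fun e₁ h₁ e₂ h₂ h => hT.injOn_edge (G.mem_edgeFinset.1 (G.incidenceFinset_subset v h₁))
      (G.mem_edgeFinset.1 (G.incidenceFinset_subset v h₂))
      (Nat.cast_injective h)
  have hcard : #s = G.degree v := by
    rw [card_image_of_injOn hinj, SimpleGraph.card_incidenceFinset_eq_degree]
  have hsum : (vWeight G fE v : ℤ) = ∑ x ∈ s, x := by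
    rw [sum_image hinj, vWeight_eq_sum_incidenceFinset]
    push_cast
    rfl
  have hmem : ∀ x ∈ s, 1 ≤ x ∧ x ≤ Fintype.card V + #G.edgeFinset := by
    simp only [s, mem_image]
    rintro _ ⟨e, he, rfl⟩
    have := hT.edge_mem_Icc (G.mem_edgeFinset.1 (G.incidenceFinset_subset v he))
    exact ⟨by exact_mod_cast this.1, by exact_mod_cast this.2⟩
  have hlow := sum_range_le_sum fun x hx => (hmem x hx).1
  have hup := sum_le_sum_range fun x hx => (hmem x hx).2
  have glow := two_mul_sum_range_add_mul 1 1 #s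
  have gup := two_mul_sum_range_add_mul (Fintype.card V + #G.edgeFinset) (-1) #s
  simp only [one_mul, neg_one_mul, ← sub_eq_add_neg] at glow gup
  rw [hsum, ← hcard]
  constructor <;> linarith

end IsTotalLabeling

end Labeling

namespace fanGraph

open Finset

variable {n k : ℕ}

abbrev Vertex (n k : ℕ) := Option (Fin n × Fin 2) ⊕ (Fin n × Fin 2) × Fin k

abbrev center : Vertex n k := Sum.inl none

abbrev outer (w : Fin n × Fin 2) : Vertex n k := Sum.inl (some w)

abbrev pendant (w : Fin n × Fin 2) (t : Fin k) : Vertex n k := Sum.inr (w, t)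

abbrev EdgeCode (n k : ℕ) := (Fin n × Fin 2) ⊕ Fin n ⊕ (Fin n × Fin 2) × Fin k

def edgeOf : EdgeCode n k → Sym2 (Vertex n k)
  | .inl w => s(center, outer w)
  | .inr (.inl i) => s(outer (i, 0), outer (i, 1))
  | .inr (.inr (w, t)) => s(outer w, pendant w t)

theorem edgeOf_injective : Function.Injective (edgeOf (n := n) (k := k)) := by
  rintro (w | i | ⟨w, t⟩) (w' | i' | ⟨w', t'⟩) h <;> simp_all [edgeOf]

theorem range_edgeOf : Set.range (edgeOf (n := n) (k := k)) = (fanGraph n k).edgeSet := by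
  ext e
  induction e with
  | _ x y =>
    rw [SimpleGraph.mem_edgeSet, fanGraph, SimpleGraph.fromRel_adj]
    constructor
    · rintro ⟨(w | i | ⟨w, t⟩), h⟩ <;> rw [edgeOf, Sym2.eq_iff] at h <;>
        rcases h with ⟨rfl, rfl⟩ | ⟨rfl, rfl⟩ <;> simp
    · rintro ⟨-, (⟨w, rfl, rfl⟩ | ⟨i, rfl, rfl⟩ | ⟨w, t, rfl, rfl⟩) |
        (⟨w, rfl, rfl⟩ | ⟨i, rfl, rfl⟩ | ⟨w, t, rfl, rfl⟩)⟩
      exacts [⟨.inl w, rfl⟩, ⟨.inr (.inl i), rfl⟩, ⟨.inr (.inr (w, t)), rfl⟩,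
        ⟨.inl w, Sym2.eq_swap⟩, ⟨.inr (.inl i), Sym2.eq_swap⟩,
        ⟨.inr (.inr (w, t)), Sym2.eq_swap⟩]

theorem card_edgeFinset : #(fanGraph n k).edgeFinset = n * 2 + (n + n * 2 * k) := by
  rw [edgeFinset_eq_map edgeOf_injective range_edgeOf, card_map, card_univ]
  simp [Fintype.card_sum, Fintype.card_prod]

theorem vWeight_center (fE : Sym2 (Vertex n k) → ℕ) :
    vWeight (fanGraph n k) fE center = ∑ w, fE s(center, outer w) := by
  rw [vWeight_eq_sum_of_range_eq edgeOf_injective range_edgeOf]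
  simp [Fintype.sum_sum_type, edgeOf]

theorem vWeight_outer (fE : Sym2 (Vertex n k) → ℕ) (w : Fin n × Fin 2) :
    vWeight (fanGraph n k) fE (outer w) = fE s(center, outer w) +
      fE s(outer (w.1, 0), outer (w.1, 1)) + ∑ t, fE s(outer w, pendant w t) := by
  rw [vWeight_eq_sum_of_range_eq edgeOf_injective range_edgeOf]
  obtain ⟨i, j⟩ := w
  fin_cases j <;> simp [Fintype.sum_sum_type, edgeOf, Fintype.sum_prod_type, add_assoc]

theorem vWeight_pendant (fE : Sym2 (Vertex n k) → ℕ) (w : Fin n × Fin 2) (t : Fin k) :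
    vWeight (fanGraph n k) fE (pendant w t) = fE s(outer w, pendant w t) := by
  rw [vWeight_eq_sum_of_range_eq edgeOf_injective range_edgeOf]
  simp [Fintype.sum_sum_type, edgeOf]

theorem degree_center : (fanGraph n k).degree center = n * 2 := by
  simp [degree_eq_vWeight_one, vWeight_center]

theorem degree_outer (w : Fin n × Fin 2) : (fanGraph n k).degree (outer w) = k + 2 := by
  simp [degree_eq_vWeight_one, vWeight_outer, add_comm]

theorem card_vertex : Fintype.card (Vertex n k) = n * 2 + 1 + n * 2 * k := by
  simp [Fintype.card_prod]

theorem pendant_edge_mem (w : Fin n × Fin 2) (t : Fin k) :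
    s(outer w, pendant w t) ∈ (fanGraph n k).edgeSet :=
  range_edgeOf ▸ ⟨.inr (.inr (w, t)), rfl⟩

theorem lt_vWeight_outer {fV : Vertex n k → ℕ} {fE : Sym2 (Vertex n k) → ℕ}
    (hT : IsTotalLabeling (fanGraph n k) fV fE) (w : Fin n × Fin 2) (t : Fin k) :
    fE s(outer w, pendant w t) < vWeight (fanGraph n k) fE (outer w) :=
  lt_vWeight (fun _ he => (hT.edge_mem_Icc he).1) ⟨pendant_edge_mem w t, Sym2.mem_mk_left _ _⟩
    (by rw [degree_outer]; omega)

theorem vWeight_outer_lt_vWeight_center {fV : Vertex n k → ℕ} {fE : Sym2 (Vertex n k) → ℕ}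
    (hT : IsTotalLabeling (fanGraph n k) fV fE) (hk : 1 ≤ k)
    (h3 : 2 * n * (2 * n + 1) + (k + 2) * (k - 1) > 2 * n * (k + 2) * (4 * k + 5))
    (w : Fin n × Fin 2) :
    vWeight (fanGraph n k) fE (outer w) < vWeight (fanGraph n k) fE center := by
  have hC := (hT.vWeight_bounds center).1
  have hS := (hT.vWeight_bounds (outer w)).2
  rw [degree_center] at hC
  rw [degree_outer, card_vertex, card_edgeFinset] at hS
  zify [hk] at h3
  push_cast at hC hS
  linarith

theorem le_weightCount {fV : Vertex n k → ℕ} {fE : Sym2 (Vertex n k) → ℕ}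
    (hT : IsTotalLabeling (fanGraph n k) fV fE) (hn : 1 ≤ n) (hk : 1 ≤ k)
    (h3 : 2 * n * (2 * n + 1) + (k + 2) * (k - 1) > 2 * n * (k + 2) * (4 * k + 5)) :
    2 * n * k + 2 ≤ weightCount (fanGraph n k) fV fE := by
  obtain ⟨x₀, -, hx₀⟩ := exists_max_image univ (fun x => fE s(outer x.1, pendant x.1 x.2))
    ⟨((⟨0, hn⟩, 0), ⟨0, hk⟩), mem_univ _⟩
  set A := univ.image fun x : (Fin n × Fin 2) × Fin k =>
    vWeight (fanGraph n k) fE (pendant x.1 x.2)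
  have hA : #A = 2 * n * k := by
    rw [card_image_of_injective, card_univ]
    · simp only [Fintype.card_prod, Fintype.card_fin]; ring
    intro x y h
    simp only [vWeight_pendant] at h
    simpa using edgeOf_injective (a₁ := .inr (.inr x)) (a₂ := .inr (.inr y))
      (hT.injOn_edge (pendant_edge_mem _ _) (pendant_edge_mem _ _) h)
  have hA_lt : ∀ a ∈ A, a < vWeight (fanGraph n k) fE (outer x₀.1) := by
    simp only [A, mem_image, mem_univ, true_and, forall_exists_index, forall_apply_eq_imp_iff,
      vWeight_pendant]
    exact fun x => (hx₀ x (mem_univ _)).trans_lt (lt_vWeight_outer hT _ _)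
  have hC := vWeight_outer_lt_vWeight_center hT hk h3 x₀.1
  calc 2 * n * k + 2 = #(insert (vWeight (fanGraph n k) fE center)
        (insert (vWeight (fanGraph n k) fE (outer x₀.1)) A)) := by
        rw [card_insert_of_notMem, card_insert_of_notMem (fun h => (hA_lt _ h).false), hA]
        simp only [mem_insert, not_or]
        exact ⟨hC.ne', fun h => (hA_lt _ h).not_gt hC⟩
    _ ≤ #(univ.image (vWeight (fanGraph n k) fE)) :=
        card_le_card (insert_subset (mem_image_of_mem _ (mem_univ _))
          (insert_subset (mem_image_of_mem _ (mem_univ _))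
            (image_subset_iff.2 fun _ _ => mem_image_of_mem _ (mem_univ _))))
    _ ≤ weightCount (fanGraph n k) fV fE := card_le_card subset_union_left

section Construction

/-- The center and the outer vertices get the labels `1, …, 2n + 1`, the pendant vertices the
rest. -/
noncomputable def vertexLabel (v : Vertex n k) : ℕ :=
  ((Equiv.sumCongr (Fintype.equivFin _) (Fintype.equivFin _)).trans finSumFinEquiv v : ℕ) + 1

theorem vertexLabel_injective : Function.Injective (vertexLabel (n := n) (k := k)) :=
  fun _ _ h => Equiv.injective _ (Fin.val_injective (Nat.add_right_cancel h))

theorem vertexLabel_le (v : Vertex n k) : vertexLabel v ≤ Fintype.card (Vertex n k) := by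
  rw [vertexLabel, Fintype.card_sum]
  exact Fin.isLt _

theorem vertexLabel_outer_le (w : Fin n × Fin 2) :
    vertexLabel (outer (k := k) w) ≤ n * 2 + 1 := by
  simpa [vertexLabel] using ((Fintype.equivFin (Option (Fin n × Fin 2))) (some w)).isLt

/-- The rank of an edge among the edge labels: spokes, then triangle bases, then pendant edges,
each block ordered lexicographically. -/
def edgeRank : EdgeCode n k ≃ Fin (n * 2 + (n + n * 2 * k)) :=
  (finProdFinEquiv.sumCongr (((Equiv.refl (Fin n)).sumCongr
    ((finProdFinEquiv.prodCongr (Equiv.refl (Fin k))).trans finProdFinEquiv)).trans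
      finSumFinEquiv)).trans finSumFinEquiv

/-- Edges get the labels above the vertex labels, pendant edges the largest ones, so that a
pendant vertex outweighs its edge. -/
noncomputable def edgeLabel : Sym2 (Vertex n k) → ℕ :=
  Function.extend edgeOf (fun c => Fintype.card (Vertex n k) + 1 + edgeRank c) 0

theorem edgeLabel_edgeOf (c : EdgeCode n k) :
    edgeLabel (edgeOf c) = Fintype.card (Vertex n k) + 1 + edgeRank c :=
  edgeOf_injective.extend_apply _ _ c

theorem edgeLabel_spoke (w : Fin n × Fin 2) :
    edgeLabel s(center, outer (k := k) w) = Fintype.card (Vertex n k) + 1 + (w.2 + 2 * w.1) :=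
  (edgeLabel_edgeOf (.inl w)).trans (by simp [edgeRank])

theorem edgeLabel_pendant (w : Fin n × Fin 2) (t : Fin k) :
    edgeLabel s(outer w, pendant w t) =
      Fintype.card (Vertex n k) + 1 + (n * 2 + (n + (t + k * (w.2 + 2 * w.1)))) :=
  (edgeLabel_edgeOf (.inr (.inr (w, t)))).trans (by simp [edgeRank])

theorem edgeLabel_mem_Icc {e : Sym2 (Vertex n k)} (he : e ∈ (fanGraph n k).edgeSet) :
    edgeLabel e ∈ Set.Icc (Fintype.card (Vertex n k) + 1)
      (Fintype.card (Vertex n k) + #(fanGraph n k).edgeFinset) := by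
  obtain ⟨c, rfl⟩ := range_edgeOf.symm ▸ he
  have := (edgeRank c).isLt
  rw [edgeLabel_edgeOf, card_edgeFinset]
  constructor <;> omega

theorem isTotalLabeling_labels :
    IsTotalLabeling (fanGraph n k) vertexLabel edgeLabel := by
  refine isTotalLabeling_of_injective vertexLabel_injective
    (fun v => ⟨Nat.le_add_left _ _, vertexLabel_le v⟩) ?_ fun _ => edgeLabel_mem_Icc
  rw [← range_edgeOf]
  rintro _ ⟨c, rfl⟩ _ ⟨c', rfl⟩ h
  rw [edgeLabel_edgeOf, edgeLabel_edgeOf, Nat.add_left_cancel_iff, Fin.val_inj] at h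
  rw [edgeRank.injective h]

theorem vWeight_outer_zero_lt_one (i : Fin n) :
    vWeight (fanGraph n k) edgeLabel (outer (i, 0)) <
      vWeight (fanGraph n k) edgeLabel (outer (i, 1)) := by
  simp only [vWeight_outer, edgeLabel_spoke, edgeLabel_pendant]
  refine add_lt_add_of_lt_of_le (by simp) (sum_le_sum fun t _ => ?_)
  gcongr
  simp

theorem isLocalTotalAntimagic_labels (hn : 1 ≤ n) (hk : 1 ≤ k)
    (h3 : 2 * n * (2 * n + 1) + (k + 2) * (k - 1) > 2 * n * (k + 2) * (4 * k + 5)) :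
    IsLocalTotalAntimagic (fanGraph n k) vertexLabel edgeLabel := by
  have hT := isTotalLabeling_labels (n := n) (k := k)
  refine ⟨hT, ?_, fun e₁ _ e₂ _ hne ⟨v, h₁, h₂⟩ =>
    eWeight_ne_eWeight_of_injective vertexLabel_injective hne h₁ h₂, ?_⟩
  · intro u v huv
    obtain ⟨c, hc⟩ : s(u, v) ∈ Set.range edgeOf := range_edgeOf ▸ huv
    have hspoke (w : Fin n × Fin 2) := (vWeight_outer_lt_vWeight_center hT hk h3 w).ne
    have htri (i : Fin n) := (vWeight_outer_zero_lt_one (k := k) i).ne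
    have hpend' (w : Fin n × Fin 2) (t : Fin k) :
        vWeight (fanGraph n k) edgeLabel (pendant w t) ≠
          vWeight (fanGraph n k) edgeLabel (outer w) := by
      rw [vWeight_pendant]
      exact (lt_vWeight_outer hT w t).ne
    rcases c with w | i | ⟨w, t⟩ <;> rw [edgeOf, Sym2.eq_iff] at hc <;>
      rcases hc with ⟨rfl, rfl⟩ | ⟨rfl, rfl⟩
    exacts [(hspoke w).symm, hspoke w, htri i, (htri i).symm, (hpend' w t).symm, hpend' w t]
  · intro v e he hv
    have hV := vertexLabel_le (n := n) (k := k)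
    have hE (e) (he : e ∈ (fanGraph n k).edgeSet) := (edgeLabel_mem_Icc he).1
    rcases v with (_ | w) | ⟨w, t⟩
    · exact (eWeight_lt_vWeight hV hE (by rw [degree_center]; omega) e).ne'
    · exact (eWeight_lt_vWeight hV hE (by rw [degree_outer]; omega) e).ne'
    · obtain ⟨c, rfl⟩ : e ∈ Set.range edgeOf := range_edgeOf ▸ he
      rcases c with w' | i | ⟨w', t'⟩ <;>
        simp only [edgeOf, Sym2.mem_iff, reduceCtorEq, or_self, Sum.inr.injEq, Prod.mk.injEq,
          false_or] at hv
      obtain ⟨rfl, rfl⟩ := hv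
      have := vertexLabel_outer_le (k := k) w
      have := hV (pendant w t)
      change _ ≠ vertexLabel (outer w) + vertexLabel (pendant w t)
      rw [vWeight_pendant, edgeLabel_pendant]
      omega

end Construction

end fanGraph

/-- for integers `n`, `k` with `2n ≥ k + 3 ≥ 4` and
`2n(2n+1) - 2n(k+2)(4k+5) + (k+2)(k-1) > 0`, the fan graph with pendant edges `f_n(k)`
satisfies `χ_lt(f_n(k)) ≥ 2nk + 2`. -/
theorem stmt6 (n k : ℕ) (h1 : k + 3 ≤ 2 * n) (h2 : 4 ≤ k + 3)
    (h3 : 2 * n * (2 * n + 1) + (k + 2) * (k - 1) > 2 * n * (k + 2) * (4 * k + 5)) :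
    2 * n * k + 2 ≤ chiLT (fanGraph n k) := by
  have hn : 1 ≤ n := by omega
  have hk : 1 ≤ k := by omega
  refine le_csInf ⟨_, _, _, fanGraph.isLocalTotalAntimagic_labels hn hk h3, rfl⟩ ?_
  rintro _ ⟨fV, fE, hA, rfl⟩
  exact fanGraph.le_weightCount hA.1 hn hk h3

end LTA
end

section
/- For every integer m ≥ 1, the disjoint union mC_6 + P_3 of m copies of the 6-cycle and one path on 3 vertices satisfies χ_lt(mC_6 + P_3) = 4. -/
/-!
Lower bound: if the edges of `P₃` carry `A` and `B`, its vertex weights are `A`, `A + B`, `B`.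
With only three weights available, two vertices at distance two never share a weight (on a
path `u v w` with `w(u) = w(w)` the weights of `u`, `v`, `uv`, `vw` would be four distinct
values), so on a hexagon any three consecutive vertices carry `A`, `B`, `A + B` in some order.
A vertex of weight `A + B` then has neighbours of weights `A` and `B`; but their weights add up
to its own weight plus two further (positive) edge labels.

Upper bound: an explicit labeling in which vertex `i` of each hexagon gets weight
`8m + 3, 16m + 5, 12m + 5` according to `i mod 3` and the edge `{i, i + 1}` the weight of
vertex `i + 2`, while the path has vertex weights `8m + 3, 20m + 8, 12m + 5`.
-/

open scoped Classical

namespace LTA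

variable {V : Type*} {W : Type*}

open SimpleGraph Finset

lemma eWeight_mk (fV : V → ℕ) (u v : V) : eWeight fV s(u, v) = fV u + fV v := rfl

lemma eWeight_ne_of_mem_of_mem {fV : V → ℕ} (hf : Function.Injective fV) {e₁ e₂ : Sym2 V}
    {v : V} (hne : e₁ ≠ e₂) (h₁ : v ∈ e₁) (h₂ : v ∈ e₂) : eWeight fV e₁ ≠ eWeight fV e₂ := by
  obtain ⟨w₁, rfl⟩ := Sym2.mem_iff_exists.mp h₁
  obtain ⟨w₂, rfl⟩ := Sym2.mem_iff_exists.mp h₂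
  rw [eWeight_mk, eWeight_mk, Ne, add_right_inj, hf.eq_iff]
  exact fun h => hne (h ▸ rfl)

section LabelingFacts

variable [Fintype V] {G : SimpleGraph V} {fV : V → ℕ} {fE : Sym2 V → ℕ}

lemma vWeight_eq_sum_neighborFinset (G : SimpleGraph V) [G.LocallyFinite] (fE : Sym2 V → ℕ)
    (v : V) : vWeight G fE v = ∑ w ∈ G.neighborFinset v, fE s(v, w) := by
  have hinc : {e ∈ G.edgeFinset | v ∈ e} = (G.neighborFinset v).image (fun w => s(v, w)) := by
    ext e
    simp only [mem_filter, mem_image, mem_edgeFinset, mem_neighborFinset]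
    constructor
    · rintro ⟨he, hv⟩
      obtain ⟨w, rfl⟩ := Sym2.mem_iff_exists.mp hv
      exact ⟨w, he, rfl⟩
    · rintro ⟨w, hw, rfl⟩
      exact ⟨hw, Sym2.mem_mk_left v w⟩
  rw [vWeight, ← sum_filter, hinc, sum_image fun _ _ _ _ h => Sym2.congr_right.mp h]

lemma vWeight_of_neighborFinset_eq_singleton [G.LocallyFinite] {u v : V}
    (h : G.neighborFinset v = {u}) : vWeight G fE v = fE s(v, u) := by
  rw [vWeight_eq_sum_neighborFinset, h, sum_singleton]

lemma vWeight_of_neighborFinset_eq_pair [DecidableEq V] [G.LocallyFinite] {u v w : V}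
    (h : G.neighborFinset v = {u, w}) (huw : u ≠ w) :
    vWeight G fE v = fE s(v, u) + fE s(v, w) := by
  rw [vWeight_eq_sum_neighborFinset, h, sum_pair huw]

lemma isTotalLabeling_of_range_eq
    (h : Set.range (Sum.elim fV (fun e : G.edgeSet => fE e.1)) =
      Set.Icc 1 (Fintype.card V + #G.edgeFinset)) : IsTotalLabeling G fV fE := by
  refine ⟨?_, h⟩
  set F := Sum.elim fV (fun e : G.edgeSet => fE e.1)
  have himage : univ.image F = Icc 1 (Fintype.card V + #G.edgeFinset) := by
    rw [← coe_inj, coe_image, coe_univ, Set.image_univ, h, coe_Icc]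
  have hcard : #(univ.image F) = #(univ : Finset (V ⊕ G.edgeSet)) := by
    rw [himage, Nat.card_Icc, card_univ, Fintype.card_sum, edgeFinset_card]
    omega
  exact Set.injOn_univ.mp (by simpa using card_image_iff.mp hcard)

lemma IsTotalLabeling.injective_vertex (h : IsTotalLabeling G fV fE) : Function.Injective fV :=
  h.1.comp Sum.inl_injective

lemma IsTotalLabeling.one_le_edge (h : IsTotalLabeling G fV fE) {e : Sym2 V}
    (he : e ∈ G.edgeSet) : 1 ≤ fE e := by
  have hmem : fE e ∈ Set.range (Sum.elim fV (fun e : G.edgeSet => fE e.1)) :=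
    ⟨.inr ⟨e, he⟩, rfl⟩
  rw [h.2] at hmem
  exact hmem.1

/-- The edge condition of a local total antimagic labeling holds automatically, since two edges
at `v` have weights `f v + f w₁` and `f v + f w₂`. -/
lemma isLocalTotalAntimagic_of_adj (hf : IsTotalLabeling G fV fE)
    (h : ∀ u v, G.Adj u v →
      vWeight G fE u ≠ vWeight G fE v ∧ vWeight G fE u ≠ eWeight fV s(u, v)) :
    IsLocalTotalAntimagic G fV fE := by
  refine ⟨hf, fun u v huv => (h u v huv).1,
    fun e₁ _ e₂ _ hne ⟨v, h₁, h₂⟩ => eWeight_ne_of_mem_of_mem hf.injective_vertex hne h₁ h₂,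
    fun v e he hv => ?_⟩
  obtain ⟨w, rfl⟩ := Sym2.mem_iff_exists.mp hv
  exact (h v w he).2

noncomputable def weightSet (G : SimpleGraph V) (fV : V → ℕ) (fE : Sym2 V → ℕ) : Finset ℕ :=
  image (vWeight G fE) univ ∪ image (eWeight fV) G.edgeFinset

lemma weightCount_eq_card_weightSet : weightCount G fV fE = #(weightSet G fV fE) := rfl

lemma vWeight_mem_weightSet (v : V) : vWeight G fE v ∈ weightSet G fV fE :=
  mem_union_left _ (mem_image_of_mem _ (mem_univ v))

lemma eWeight_mem_weightSet {e : Sym2 V} (he : e ∈ G.edgeSet) :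
    eWeight fV e ∈ weightSet G fV fE :=
  mem_union_right _ (mem_image_of_mem _ (G.mem_edgeFinset.2 he))

lemma IsLocalTotalAntimagic.vWeight_ne_of_adj_of_adj (h : IsLocalTotalAntimagic G fV fE)
    (h3 : weightCount G fV fE ≤ 3) {u v w : V} (huv : G.Adj u v) (hvw : G.Adj v w)
    (huw : u ≠ w) : vWeight G fE u ≠ vWeight G fE w := by
  obtain ⟨-, hvert, hedge, hinc⟩ := h
  intro heq
  have hu := hinc u _ huv (Sym2.mem_mk_left u v)
  have hv := hinc v _ huv (Sym2.mem_mk_right u v)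
  have hv' := hinc v _ hvw (Sym2.mem_mk_left v w)
  have hw := hinc w _ hvw (Sym2.mem_mk_right v w)
  have hedges : eWeight fV s(u, v) ≠ eWeight fV s(v, w) :=
    hedge _ huv _ hvw (by simp [huv.ne, huw])
      ⟨v, Sym2.mem_mk_right u v, Sym2.mem_mk_left v w⟩
  have hsub : {vWeight G fE u, vWeight G fE v, eWeight fV s(u, v), eWeight fV s(v, w)} ⊆
      weightSet G fV fE := by
    simp only [insert_subset_iff, singleton_subset_iff]
    exact ⟨vWeight_mem_weightSet u, vWeight_mem_weightSet v, eWeight_mem_weightSet huv,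
      eWeight_mem_weightSet hvw⟩
  have hcard := (card_le_card hsub).trans h3
  rw [card_insert_of_notMem, card_insert_of_notMem, card_pair hedges] at hcard
  · omega
  · simp only [mem_insert, mem_singleton, not_or]
    exact ⟨hv, hv'⟩
  · simp only [mem_insert, mem_singleton, not_or]
    exact ⟨hvert u v huv, hu, heq ▸ hw⟩

lemma chiLT_eq_of_le {k : ℕ}
    (hex : ∃ fV fE, IsLocalTotalAntimagic G fV fE ∧ weightCount G fV fE ≤ k)
    (hle : ∀ fV fE, IsLocalTotalAntimagic G fV fE → k ≤ weightCount G fV fE) :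
    chiLT G = k := by
  obtain ⟨fV, fE, h, hk⟩ := hex
  have hmem : weightCount G fV fE ∈
      {n | ∃ fV fE, IsLocalTotalAntimagic G fV fE ∧ weightCount G fV fE = n} :=
    ⟨fV, fE, h, rfl⟩
  refine le_antisymm ((Nat.sInf_le hmem).trans hk) (le_csInf ⟨_, hmem⟩ ?_)
  rintro _ ⟨fV', fE', h', rfl⟩
  exact hle fV' fE' h'

end LabelingFacts

/-- If a vertex of the cycle has weight `A + B`, its two neighbours carry `A` and `B`, so
`W (i - 1) + W (i + 1) = W i`; but the left side exceeds `W i` by `x (i - 2) + x (i + 1) > 0`. -/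
lemma cycle_weights_not_mem_triple {n : ℕ} [NeZero n] {A B : ℕ} {x W : Fin n → ℕ}
    (hx : ∀ i, 0 < x i) (hW : ∀ i, W i = x (i - 1) + x i)
    (hmem : ∀ i, W i = A ∨ W i = B ∨ W i = A + B)
    (hadj : ∀ i, W i ≠ W (i + 1)) (hgap : ∀ i, W (i - 1) ≠ W (i + 1)) : False := by
  have hprev : ∀ i, W (i - 1) ≠ W i := fun i => by simpa using hadj (i - 1)
  have hsum : ∀ i, W i ≠ A + B := by
    intro i hi
    have hnext : W (i + 1) = x i + x (i + 1) := by simpa using hW (i + 1)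
    have := hW (i - 1)
    have := hW i
    have := hx (i - 1 - 1)
    have := hx (i + 1)
    have := hprev i
    have := hadj i
    have := hgap i
    rcases hmem (i - 1) with h | h | h <;> rcases hmem (i + 1) with h' | h' | h' <;> omega
  have := hprev 0
  have := hadj 0
  have := hgap 0
  have := hsum (0 - 1)
  have := hsum 0
  have := hsum 1
  rcases hmem (0 - 1) with h | h | h <;> rcases hmem 0 with h' | h' | h' <;>
    rcases hmem (0 + 1) with h'' | h'' | h'' <;> simp_all

section CyclesPath

abbrev CyclesPathVertex (m : ℕ) := (Fin m × Fin 6) ⊕ Fin 3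

abbrev cyclesPath (m : ℕ) : SimpleGraph (CyclesPathVertex m) :=
  copies m (cycleGraph 6) ⊕g pathGraph 3

variable {m : ℕ}

/-- The successor along a hexagon or along the path; on the path it wraps around `Fin 3`, so
`next (inr 2)` is not a neighbour of `inr 2`. -/
def next : CyclesPathVertex m → CyclesPathVertex m := Sum.map (Prod.map id (· + 1)) (· + 1)

def fwdEdge (u : CyclesPathVertex m) : Sym2 (CyclesPathVertex m) := s(u, next u)

lemma next_next_ne (u : CyclesPathVertex m) : next (next u) ≠ u := by
  rcases u with ⟨j, i⟩ | k
  · simp only [next, Sum.map_inl, Prod.map, id, ne_eq, Sum.inl.injEq, Prod.mk.injEq, true_and]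
    revert i; decide
  · simp only [next, Sum.map_inr, ne_eq, Sum.inr.injEq]
    revert k; decide

lemma cycleGraph_six_adj {i i' : Fin 6} : (cycleGraph 6).Adj i i' ↔ i' = i + 1 ∨ i = i' + 1 := by
  refine (cycleGraph_adj (n := 4)).trans ?_
  revert i i'; decide

lemma pathGraph_three_adj {k k' : Fin 3} :
    (pathGraph 3).Adj k k' ↔ (k' = k + 1 ∧ k ≠ 2) ∨ (k = k' + 1 ∧ k' ≠ 2) := by
  rw [pathGraph_adj]
  revert k k'; decide

lemma cyclesPath_adj {u v : CyclesPathVertex m} :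
    (cyclesPath m).Adj u v ↔ (v = next u ∧ u ≠ .inr 2) ∨ (u = next v ∧ v ≠ .inr 2) := by
  rcases u with ⟨j, i⟩ | k <;> rcases v with ⟨j', i'⟩ | k'
  · simp only [sum_adj_inl, copies, cycleGraph_six_adj, next, Sum.map_inl, Prod.map, id]
    aesop
  · simp [next]
  · simp [next]
  · simp [pathGraph_three_adj, next]

lemma adj_next {u : CyclesPathVertex m} (hu : u ≠ .inr 2) : (cyclesPath m).Adj u (next u) :=
  cyclesPath_adj.mpr (Or.inl ⟨rfl, hu⟩)

lemma fwdEdge_mem_edgeSet {u : CyclesPathVertex m} (hu : u ≠ .inr 2) :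
    fwdEdge u ∈ (cyclesPath m).edgeSet :=
  adj_next hu

lemma exists_eq_fwdEdge {e : Sym2 (CyclesPathVertex m)} (he : e ∈ (cyclesPath m).edgeSet) :
    ∃ u, u ≠ .inr 2 ∧ e = fwdEdge u := by
  induction e using Sym2.ind with
  | _ u v =>
    rcases cyclesPath_adj.mp ((mem_edgeSet _).mp he) with ⟨rfl, hu⟩ | ⟨rfl, hv⟩
    · exact ⟨u, hu, rfl⟩
    · exact ⟨v, hv, Sym2.eq_swap⟩

lemma fwdEdge_injective : Function.Injective (fwdEdge (m := m)) := by
  intro u v h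
  rcases Sym2.eq_iff.mp h with ⟨h₁, -⟩ | ⟨h₁, h₂⟩
  · exact h₁
  · exact absurd (by rw [h₂]; exact h₁.symm) (next_next_ne u)

lemma card_edgeFinset_cyclesPath : #(cyclesPath m).edgeFinset = 6 * m + 2 := by
  have hedges : (cyclesPath m).edgeFinset = (univ.erase (.inr 2)).image fwdEdge := by
    ext e
    simp only [mem_edgeFinset, mem_image, mem_erase, mem_univ, and_true]
    constructor
    · rintro he
      obtain ⟨u, hu, rfl⟩ := exists_eq_fwdEdge he
      exact ⟨u, hu, rfl⟩
    · rintro ⟨u, hu, rfl⟩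
      exact fwdEdge_mem_edgeSet hu
  rw [hedges, card_image_of_injective _ fwdEdge_injective, card_erase_of_mem (mem_univ _),
    card_univ]
  simp
  ring

lemma neighborFinset_inl (j : Fin m) (i : Fin 6) :
    (cyclesPath m).neighborFinset (.inl (j, i)) = {.inl (j, i - 1), .inl (j, i + 1)} := by
  ext w
  simp only [mem_neighborFinset, cyclesPath_adj]
  rcases w with ⟨j', i'⟩ | k
  · simp only [next, Sum.map_inl, Prod.map, id, Sum.inl.injEq, Prod.mk.injEq, mem_insert,
      mem_singleton, eq_sub_iff_add_eq]
    aesop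
  · simp [next]

lemma neighborFinset_inr_zero : (cyclesPath m).neighborFinset (.inr 0) = {.inr 1} := by
  ext w
  simp only [mem_neighborFinset, cyclesPath_adj]
  rcases w with ⟨j', i'⟩ | k <;> simp [next]
  revert k; decide

lemma neighborFinset_inr_one : (cyclesPath m).neighborFinset (.inr 1) = {.inr 0, .inr 2} := by
  ext w
  simp only [mem_neighborFinset, cyclesPath_adj]
  rcases w with ⟨j', i'⟩ | k <;> simp [next]
  revert k; decide

lemma neighborFinset_inr_two : (cyclesPath m).neighborFinset (.inr 2) = {.inr 1} := by
  ext w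
  simp only [mem_neighborFinset, cyclesPath_adj]
  rcases w with ⟨j', i'⟩ | k <;> simp [next]
  revert k; decide

lemma vWeight_inl (fE : Sym2 (CyclesPathVertex m) → ℕ) (j : Fin m) (i : Fin 6) :
    vWeight (cyclesPath m) fE (.inl (j, i)) =
      fE (fwdEdge (.inl (j, i - 1))) + fE (fwdEdge (.inl (j, i))) := by
  have hne : (.inl (j, i - 1) : CyclesPathVertex m) ≠ .inl (j, i + 1) := by
    simp only [ne_eq, Sum.inl.injEq, Prod.mk.injEq, true_and]
    revert i; decide
  rw [vWeight_of_neighborFinset_eq_pair (neighborFinset_inl j i) hne, Sym2.eq_swap]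
  simp [fwdEdge, next]

lemma vWeight_inr_zero (fE : Sym2 (CyclesPathVertex m) → ℕ) :
    vWeight (cyclesPath m) fE (.inr 0) = fE (fwdEdge (.inr 0)) :=
  vWeight_of_neighborFinset_eq_singleton neighborFinset_inr_zero

lemma vWeight_inr_one (fE : Sym2 (CyclesPathVertex m) → ℕ) :
    vWeight (cyclesPath m) fE (.inr 1) = fE (fwdEdge (.inr 0)) + fE (fwdEdge (.inr 1)) := by
  rw [vWeight_of_neighborFinset_eq_pair neighborFinset_inr_one (by simp), Sym2.eq_swap]
  rfl

lemma vWeight_inr_two (fE : Sym2 (CyclesPathVertex m) → ℕ) :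
    vWeight (cyclesPath m) fE (.inr 2) = fE (fwdEdge (.inr 1)) := by
  rw [vWeight_of_neighborFinset_eq_singleton neighborFinset_inr_two, Sym2.eq_swap]
  rfl

lemma adj_inl_sub_one (j : Fin m) (i : Fin 6) :
    (cyclesPath m).Adj (.inl (j, i - 1)) (.inl (j, i)) := by
  simpa [next] using adj_next (m := m) (u := .inl (j, i - 1)) (by simp)

lemma weightSet_eq_of_weightCount_le_three {fV : CyclesPathVertex m → ℕ}
    {fE : Sym2 (CyclesPathVertex m) → ℕ} (h : IsLocalTotalAntimagic (cyclesPath m) fV fE)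
    (h3 : weightCount (cyclesPath m) fV fE ≤ 3) :
    ∃ A B, weightSet (cyclesPath m) fV fE = {A, B, A + B} := by
  set A := fE (fwdEdge (.inr 0))
  set B := fE (fwdEdge (.inr 1))
  have hw₀ : vWeight (cyclesPath m) fE (.inr 0) = A := vWeight_inr_zero fE
  have hw₁ : vWeight (cyclesPath m) fE (.inr 1) = A + B := vWeight_inr_one fE
  have hw₂ : vWeight (cyclesPath m) fE (.inr 2) = B := vWeight_inr_two fE
  have h01 : (cyclesPath m).Adj (.inr 0) (.inr 1) := adj_next (by simp)
  have h12 : (cyclesPath m).Adj (.inr 1) (.inr 2) := adj_next (by simp)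
  have hA : A ≠ A + B := by
    rw [← hw₁, ← hw₀]
    exact h.2.1 _ _ h01
  have hB : A + B ≠ B := by
    rw [← hw₁, ← hw₂]
    exact h.2.1 _ _ h12
  have hAB : A ≠ B := by
    rw [← hw₀, ← hw₂]
    exact h.vWeight_ne_of_adj_of_adj h3 h01 h12 (by simp)
  refine ⟨A, B, (eq_of_subset_of_card_le ?_ ?_).symm⟩
  · have hmem (v) := vWeight_mem_weightSet (G := cyclesPath m) (fV := fV) (fE := fE) v
    simp only [insert_subset_iff, singleton_subset_iff]
    exact ⟨hw₀ ▸ hmem (.inr 0), hw₂ ▸ hmem (.inr 2), hw₁ ▸ hmem (.inr 1)⟩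
  · rw [← weightCount_eq_card_weightSet, card_insert_of_notMem (by simp; omega),
      card_pair hB.symm]
    exact h3

lemma four_le_weightCount (hm : 1 ≤ m) {fV : CyclesPathVertex m → ℕ}
    {fE : Sym2 (CyclesPathVertex m) → ℕ} (h : IsLocalTotalAntimagic (cyclesPath m) fV fE) :
    4 ≤ weightCount (cyclesPath m) fV fE := by
  by_contra! h4
  have h3 : weightCount (cyclesPath m) fV fE ≤ 3 := by omega
  obtain ⟨A, B, hweights⟩ := weightSet_eq_of_weightCount_le_three h h3
  set j : Fin m := ⟨0, hm⟩
  refine cycle_weights_not_mem_triple (A := A) (B := B)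
    (x := fun i => fE (fwdEdge (.inl (j, i)))) (W := fun i => vWeight _ fE (.inl (j, i)))
    (fun i => h.1.one_le_edge (fwdEdge_mem_edgeSet (by simp))) (vWeight_inl fE j)
    (fun i => ?_) (fun i => h.2.1 _ _ (adj_next (by simp)))
    (fun i => h.vWeight_ne_of_adj_of_adj h3 (adj_inl_sub_one j i) (adj_next (by simp)) ?_)
  · have hmem := vWeight_mem_weightSet (G := cyclesPath m) (fV := fV) (fE := fE) (.inl (j, i))
    simpa [hweights] using hmem
  · simp only [ne_eq, Sum.inl.injEq, Prod.mk.injEq, true_and]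
    revert i; decide

def cycleVertexLabel (m j : ℕ) : Fin 6 → ℕ :=
  ![9 * m + 4 + j, 3 * m + 1 - j, 5 * m + 2 + j, 11 * m + 3 - j, m + 2 + j, 7 * m + 1 - j]

def cycleEdgeLabel (m j : ℕ) : Fin 6 → ℕ :=
  ![4 * m + 2 + j, 12 * m + 3 - j, 2 + j, 8 * m + 1 - j, 8 * m + 4 + j, 4 * m + 1 - j]

def vertexLabel (m : ℕ) : CyclesPathVertex m → ℕ :=
  Sum.elim (fun x => cycleVertexLabel m x.1 x.2) ![12 * m + 4, 1, 8 * m + 2]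

/-- The label of `fwdEdge u` (the value at `inr 2` is never used). -/
def fwdLabel (m : ℕ) : CyclesPathVertex m → ℕ :=
  Sum.elim (fun x => cycleEdgeLabel m x.1 x.2) ![8 * m + 3, 12 * m + 5, 0]

/-- Symmetric by construction; on `fwdEdge u` only the first summand survives because
`next (next u) ≠ u`. -/
noncomputable def edgeLabel (m : ℕ) : Sym2 (CyclesPathVertex m) → ℕ :=
  Sym2.lift ⟨fun u v => (if v = next u then fwdLabel m u else 0) +
    (if u = next v then fwdLabel m v else 0), fun _ _ => add_comm _ _⟩

lemma edgeLabel_fwdEdge (u : CyclesPathVertex m) : edgeLabel m (fwdEdge u) = fwdLabel m u := by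
  simp [edgeLabel, fwdEdge, (next_next_ne u).symm]

def cycleWeight (m : ℕ) : Fin 6 → ℕ :=
  ![8 * m + 3, 16 * m + 5, 12 * m + 5, 8 * m + 3, 16 * m + 5, 12 * m + 5]

def vertexWeight (m : ℕ) : CyclesPathVertex m → ℕ :=
  Sum.elim (fun x => cycleWeight m x.2) ![8 * m + 3, 20 * m + 8, 12 * m + 5]

/-- The weight of `fwdEdge u` (the value at `inr 2` is never used). -/
def fwdWeight (m : ℕ) : CyclesPathVertex m → ℕ :=
  Sum.elim (fun x => cycleWeight m (x.2 + 2)) ![12 * m + 5, 8 * m + 3, 0]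

lemma vWeight_edgeLabel (v : CyclesPathVertex m) :
    vWeight (cyclesPath m) (edgeLabel m) v = vertexWeight m v := by
  rcases v with ⟨j, i⟩ | k
  · rw [vWeight_inl, edgeLabel_fwdEdge, edgeLabel_fwdEdge]
    have := j.isLt
    fin_cases i <;> simp [fwdLabel, cycleEdgeLabel, vertexWeight, cycleWeight] <;> omega
  · fin_cases k
    · simp [vWeight_inr_zero, edgeLabel_fwdEdge, fwdLabel, vertexWeight]
    · simp [vWeight_inr_one, edgeLabel_fwdEdge, fwdLabel, vertexWeight]
      ring
    · simp [vWeight_inr_two, edgeLabel_fwdEdge, fwdLabel, vertexWeight]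

lemma eWeight_fwdEdge {u : CyclesPathVertex m} (hu : u ≠ .inr 2) :
    eWeight (vertexLabel m) (fwdEdge u) = fwdWeight m u := by
  rcases u with ⟨j, i⟩ | k
  · have := j.isLt
    fin_cases i <;>
      simp [fwdEdge, next, eWeight_mk, vertexLabel, cycleVertexLabel, fwdWeight, cycleWeight] <;>
      omega
  · fin_cases k <;> simp_all [fwdEdge, next, eWeight_mk, vertexLabel, fwdWeight]
    omega

lemma fwd_weights_ne {u : CyclesPathVertex m} (hu : u ≠ .inr 2) :
    vertexWeight m u ≠ vertexWeight m (next u) ∧ vertexWeight m u ≠ fwdWeight m u ∧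
      vertexWeight m (next u) ≠ fwdWeight m u := by
  rcases u with ⟨j, i⟩ | k
  · have := j.isLt
    fin_cases i <;> simp [vertexWeight, fwdWeight, next, cycleWeight] <;> omega
  · fin_cases k <;> simp_all [vertexWeight, fwdWeight, next] <;> omega

lemma weightCount_labeling_le :
    weightCount (cyclesPath m) (vertexLabel m) (edgeLabel m) ≤ 4 := by
  refine (card_le_card (t := {8 * m + 3, 12 * m + 5, 16 * m + 5, 20 * m + 8}) ?_).trans
    card_le_four
  intro w hw
  rcases mem_union.mp hw with hw | hw
  · obtain ⟨v, -, rfl⟩ := mem_image.mp hw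
    rw [vWeight_edgeLabel]
    rcases v with ⟨j, i⟩ | k
    · fin_cases i <;> simp [vertexWeight, cycleWeight]
    · fin_cases k <;> simp [vertexWeight]
  · obtain ⟨e, he, rfl⟩ := mem_image.mp hw
    obtain ⟨u, hu, rfl⟩ := exists_eq_fwdEdge (mem_edgeFinset.mp he)
    rw [eWeight_fwdEdge hu]
    rcases u with ⟨j, i⟩ | k
    · fin_cases i <;> simp [fwdWeight, cycleWeight]
    · fin_cases k <;> simp_all [fwdWeight]

noncomputable def totalLabel (m : ℕ) : CyclesPathVertex m ⊕ (cyclesPath m).edgeSet → ℕ :=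
  Sum.elim (vertexLabel m) (fun e => edgeLabel m e.1)

lemma totalLabel_mem_Icc (z : CyclesPathVertex m ⊕ (cyclesPath m).edgeSet) :
    totalLabel m z ∈ Set.Icc 1 (12 * m + 5) := by
  rcases z with (⟨j, i⟩ | k) | ⟨e, he⟩
  · have := j.isLt
    fin_cases i <;> simp [totalLabel, vertexLabel, cycleVertexLabel] <;> omega
  · fin_cases k <;> simp [totalLabel, vertexLabel]
    omega
  · obtain ⟨u, hu, rfl⟩ := exists_eq_fwdEdge he
    simp only [totalLabel, Sum.elim_inr, edgeLabel_fwdEdge]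
    rcases u with ⟨j, i⟩ | k
    · have := j.isLt
      fin_cases i <;> simp [fwdLabel, cycleEdgeLabel] <;> omega
    · fin_cases k <;> simp_all [fwdLabel]
      omega

lemma vertexLabel_mem_range {n : ℕ} (v : CyclesPathVertex m) (h : vertexLabel m v = n) :
    n ∈ Set.range (totalLabel m) :=
  ⟨.inl v, h⟩

lemma fwdLabel_mem_range {n : ℕ} {u : CyclesPathVertex m} (hu : u ≠ .inr 2)
    (h : fwdLabel m u = n) : n ∈ Set.range (totalLabel m) :=
  ⟨.inr ⟨fwdEdge u, fwdEdge_mem_edgeSet hu⟩, (edgeLabel_fwdEdge u).trans h⟩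

/-- Each of the twelve label families `i ↦ c + j` or `i ↦ c - j` (`j < m`) of the hexagons fills a
block of `m` consecutive integers; together with the five labels of the path these blocks tile
`[1, 12m + 5]`. -/
lemma Icc_subset_range_totalLabel : Set.Icc 1 (12 * m + 5) ⊆ Set.range (totalLabel m) := by
  rintro n ⟨h₁, h₂⟩
  rcases (show n = 1 ∨ (2 ≤ n ∧ n ≤ m + 1) ∨ (m + 2 ≤ n ∧ n ≤ 2 * m + 1) ∨
      (2 * m + 2 ≤ n ∧ n ≤ 3 * m + 1) ∨ (3 * m + 2 ≤ n ∧ n ≤ 4 * m + 1) ∨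
      (4 * m + 2 ≤ n ∧ n ≤ 5 * m + 1) ∨ (5 * m + 2 ≤ n ∧ n ≤ 6 * m + 1) ∨
      (6 * m + 2 ≤ n ∧ n ≤ 7 * m + 1) ∨ (7 * m + 2 ≤ n ∧ n ≤ 8 * m + 1) ∨ n = 8 * m + 2 ∨
      n = 8 * m + 3 ∨ (8 * m + 4 ≤ n ∧ n ≤ 9 * m + 3) ∨ (9 * m + 4 ≤ n ∧ n ≤ 10 * m + 3) ∨
      (10 * m + 4 ≤ n ∧ n ≤ 11 * m + 3) ∨ (11 * m + 4 ≤ n ∧ n ≤ 12 * m + 3) ∨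
      n = 12 * m + 4 ∨ n = 12 * m + 5 by omega) with
    h | h | h | h | h | h | h | h | h | h | h | h | h | h | h | h | h
  · exact vertexLabel_mem_range (.inr 1) (by simp [vertexLabel, h])
  · exact fwdLabel_mem_range (u := .inl (⟨n - 2, by omega⟩, 2)) (by simp)
      (by simp [fwdLabel, cycleEdgeLabel]; omega)
  · exact vertexLabel_mem_range (.inl (⟨n - (m + 2), by omega⟩, 4))
      (by simp [vertexLabel, cycleVertexLabel]; omega)
  · exact vertexLabel_mem_range (.inl (⟨3 * m + 1 - n, by omega⟩, 1))
      (by simp [vertexLabel, cycleVertexLabel]; omega)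
  · exact fwdLabel_mem_range (u := .inl (⟨4 * m + 1 - n, by omega⟩, 5)) (by simp)
      (by simp [fwdLabel, cycleEdgeLabel]; omega)
  · exact fwdLabel_mem_range (u := .inl (⟨n - (4 * m + 2), by omega⟩, 0)) (by simp)
      (by simp [fwdLabel, cycleEdgeLabel]; omega)
  · exact vertexLabel_mem_range (.inl (⟨n - (5 * m + 2), by omega⟩, 2))
      (by simp [vertexLabel, cycleVertexLabel]; omega)
  · exact vertexLabel_mem_range (.inl (⟨7 * m + 1 - n, by omega⟩, 5))
      (by simp [vertexLabel, cycleVertexLabel]; omega)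
  · exact fwdLabel_mem_range (u := .inl (⟨8 * m + 1 - n, by omega⟩, 3)) (by simp)
      (by simp [fwdLabel, cycleEdgeLabel]; omega)
  · exact vertexLabel_mem_range (.inr 2) (by simp [vertexLabel, h])
  · exact fwdLabel_mem_range (u := .inr 0) (by simp) (by simp [fwdLabel, h])
  · exact fwdLabel_mem_range (u := .inl (⟨n - (8 * m + 4), by omega⟩, 4)) (by simp)
      (by simp [fwdLabel, cycleEdgeLabel]; omega)
  · exact vertexLabel_mem_range (.inl (⟨n - (9 * m + 4), by omega⟩, 0))
      (by simp [vertexLabel, cycleVertexLabel]; omega)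
  · exact vertexLabel_mem_range (.inl (⟨11 * m + 3 - n, by omega⟩, 3))
      (by simp [vertexLabel, cycleVertexLabel]; omega)
  · exact fwdLabel_mem_range (u := .inl (⟨12 * m + 3 - n, by omega⟩, 1)) (by simp)
      (by simp [fwdLabel, cycleEdgeLabel]; omega)
  · exact vertexLabel_mem_range (.inr 0) (by simp [vertexLabel, h])
  · exact fwdLabel_mem_range (u := .inr 1) (by simp) (by simp [fwdLabel, h])

lemma isTotalLabeling_labeling : IsTotalLabeling (cyclesPath m) (vertexLabel m) (edgeLabel m) := by
  apply isTotalLabeling_of_range_eq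
  have hcard : Fintype.card (CyclesPathVertex m) + #(cyclesPath m).edgeFinset = 12 * m + 5 := by
    simp [card_edgeFinset_cyclesPath]
    ring
  rw [hcard]
  exact (Set.range_subset_iff.mpr totalLabel_mem_Icc).antisymm Icc_subset_range_totalLabel

lemma isLocalTotalAntimagic_labeling :
    IsLocalTotalAntimagic (cyclesPath m) (vertexLabel m) (edgeLabel m) := by
  refine isLocalTotalAntimagic_of_adj isTotalLabeling_labeling fun u v huv => ?_
  simp only [vWeight_edgeLabel]
  rcases cyclesPath_adj.mp huv with ⟨rfl, hu⟩ | ⟨rfl, hv⟩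
  · obtain ⟨hne, hfwd, -⟩ := fwd_weights_ne hu
    exact ⟨hne, (eWeight_fwdEdge hu).symm ▸ hfwd⟩
  · obtain ⟨hne, -, hfwd⟩ := fwd_weights_ne hv
    rw [Sym2.eq_swap]
    exact ⟨hne.symm, (eWeight_fwdEdge hv).symm ▸ hfwd⟩

end CyclesPath

/-- for every `m ≥ 1`, `χ_lt(mC₆ + P₃) = 4`. -/
theorem stmt16 (m : ℕ) (hm : 1 ≤ m) :
    chiLT (copies m (SimpleGraph.cycleGraph 6) ⊕g SimpleGraph.pathGraph 3) = 4 :=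
  chiLT_eq_of_le ⟨vertexLabel m, edgeLabel m, isLocalTotalAntimagic_labeling,
    weightCount_labeling_le⟩ fun _ _ h => four_le_weightCount hm h

end LTA
end
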